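/- arXiv:2511.07799 — 3 statements merged into one kernel-verified Lean document; each statement's English description precedes it below -/
import Mathlib

section
/- For every γ > 1, μ > 0, λ > 0 and 0 < a < b there exist C > 0 and δ₀ > 0 independent of τ, and for every integer k ≥ 2 a constant C_k > 0 independent of τ, such that: for all end states with a ≤ v_- < v_+ ≤ b and δ := p(v_-) − p(v_+) ≤ δ₀, every τ satisfying the smallness condition, and every planar 2-viscous shock profile v^s, the stress profiles Π₁₁^s := −((4/3)μ/((4/3)μ+λ)) · h(v^s) and Π₂^s := −(λ/((4/3)μ+λ)) · h(v^s) satisfy |Π₁₁^s(ξ)| + |Π₂^s(ξ)| ≤ C (v^s)′(ξ) for all ξ ∈ ℝ, and for every integer k ≥ 2 and all ξ ∈ ℝ, |(Π₁₁^s)^{(k−1)}(ξ)| + |(Π₂^s)^{(k−1)}(ξ)| ≤ C_k δ (v^s)′(ξ). -/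
open Filter

/-- Pressure law `p(v) = v^(-γ)`. -/
noncomputable def pres (γ v : ℝ) : ℝ := v ^ (-γ)

/-- Shock speed `σ* = √((p(v₋) - p(v₊))/(v₊ - v₋))`. -/
noncomputable def sigmaStar (γ vm vp : ℝ) : ℝ :=
  Real.sqrt ((pres γ vm - pres γ vp) / (vp - vm))

/-- Shock strength `δ = p(v₋) - p(v₊)`. -/
noncomputable def shockDelta (γ vm vp : ℝ) : ℝ := pres γ vm - pres γ vp

/-- `h(v) = σ*²(v₋ - v) + (p(v₋) - p(v))`. -/
noncomputable def hfun (γ vm vp v : ℝ) : ℝ :=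
  sigmaStar γ vm vp ^ 2 * (vm - v) + (pres γ vm - pres γ v)

/-- `h′(v) = -σ*² - p′(v)`. -/
noncomputable def hder (γ vm vp v : ℝ) : ℝ :=
  -sigmaStar γ vm vp ^ 2 - deriv (pres γ) v

/-- The denominator `σ*((4/3)μ + λ) + τσ*h′(v)` of the profile ODE. -/
noncomputable def profDen (γ μ lam vm vp τ v : ℝ) : ℝ :=
  sigmaStar γ vm vp * (4 / 3 * μ + lam) + τ * sigmaStar γ vm vp * hder γ vm vp v

/-- Smallness condition `τ ≤ min{inf_{z∈[v₋,v₊]} ((4/3)μ+λ)/(2|σ*² + p′(z)|), 1}`. -/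
def SmallTau (γ μ lam vm vp τ : ℝ) : Prop :=
  0 ≤ τ ∧ τ ≤ 1 ∧
    ∀ z ∈ Set.Icc vm vp,
      2 * τ * |sigmaStar γ vm vp ^ 2 + deriv (pres γ) z| ≤ 4 / 3 * μ + lam

/-- A planar 2-viscous shock profile: a solution of
`(v^s)′ = h(v^s)/(σ*((4/3)μ+λ) + τσ*h′(v^s))` with values in `(v₋, v₊)` and
limits `v∓` at `∓∞`. -/
def IsShockProfile (γ μ lam vm vp τ : ℝ) (vs : ℝ → ℝ) : Prop :=
  (∀ ξ, vs ξ ∈ Set.Ioo vm vp) ∧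
  (∀ ξ, HasDerivAt vs (hfun γ vm vp (vs ξ) / profDen γ μ lam vm vp τ (vs ξ)) ξ) ∧
  Tendsto vs atBot (nhds vm) ∧ Tendsto vs atTop (nhds vp)

/-- The stress component `Π₁₁^s = -((4/3)μ/((4/3)μ+λ)) h(v^s)` of the shock profile. -/
noncomputable def Pi11s (γ μ lam vm vp : ℝ) (vs : ℝ → ℝ) (ξ : ℝ) : ℝ :=
  -((4 / 3 * μ) / (4 / 3 * μ + lam)) * hfun γ vm vp (vs ξ)

/-- The scalar stress `Π₂^s = -(λ/((4/3)μ+λ)) h(v^s)` of the shock profile. -/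
noncomputable def Pi2s (γ μ lam vm vp : ℝ) (vs : ℝ → ℝ) (ξ : ℝ) : ℝ :=
  -(lam / (4 / 3 * μ + lam)) * hfun γ vm vp (vs ξ)

open Set

namespace ShockAux

/-- `j`-th derivative of the pressure, explicitly. -/
noncomputable def pd (γ : ℝ) (j : ℕ) (v : ℝ) : ℝ :=
  (∏ i ∈ Finset.range j, (-γ - (i : ℝ))) * v ^ (-γ - (j : ℝ))

lemma pd_zero (γ : ℝ) : pd γ 0 = pres γ := by
  funext v; simp [pd, pres]

lemma pd_hasDerivAt (γ : ℝ) (j : ℕ) {v : ℝ} (hv : v ≠ 0) :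
    HasDerivAt (pd γ j) (pd γ (j + 1) v) v := by
  have h := (Real.hasDerivAt_rpow_const (p := -γ - (j : ℝ)) (Or.inl hv)).const_mul
    (∏ i ∈ Finset.range j, (-γ - (i : ℝ)))
  have he : -γ - ((j : ℕ) + 1 : ℝ) = -γ - (j : ℝ) - 1 := by ring
  have hpd : pd γ (j + 1) v
      = (∏ i ∈ Finset.range j, (-γ - (i : ℝ))) * ((-γ - (j : ℝ)) * v ^ (-γ - (j : ℝ) - 1)) := by
    rw [pd, Finset.prod_range_succ]
    push_cast
    rw [← he]
    push_cast
    ring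
  rw [hpd]
  exact h
lemma pres_hasDerivAt (γ : ℝ) {v : ℝ} (hv : v ≠ 0) :
    HasDerivAt (pres γ) (pd γ 1 v) v := by
  rw [← pd_zero]
  exact pd_hasDerivAt γ 0 hv

lemma deriv_pres (γ : ℝ) {v : ℝ} (hv : v ≠ 0) : deriv (pres γ) v = pd γ 1 v :=
  (pres_hasDerivAt γ hv).deriv

lemma pd_one (γ v : ℝ) : pd γ 1 v = -(γ * v ^ (-γ - 1)) := by
  rw [pd, Finset.prod_range_one]
  push_cast
  ring

/-- A uniform bound for `pd γ j` on `[a, ∞)`. -/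
noncomputable def Kp (γ a : ℝ) (j : ℕ) : ℝ :=
  (∏ i ∈ Finset.range j, (γ + (i : ℝ))) * a ^ (-γ - (j : ℝ))

lemma Kp_pos {γ a : ℝ} (hγ : 0 < γ) (ha : 0 < a) (j : ℕ) : 0 < Kp γ a j := by
  apply mul_pos
  · exact Finset.prod_pos fun i _ => by positivity
  · exact Real.rpow_pos_of_pos ha _

lemma abs_pd_le {γ a : ℝ} (hγ : 0 < γ) (ha : 0 < a) (j : ℕ) {v : ℝ} (hv : a ≤ v) :
    |pd γ j v| ≤ Kp γ a j := by
  have hv0 : 0 < v := lt_of_lt_of_le ha hv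
  rw [pd, Kp, abs_mul, Finset.abs_prod]
  have h1 : ∏ i ∈ Finset.range j, |-γ - (i : ℝ)| = ∏ i ∈ Finset.range j, (γ + (i : ℝ)) := by
    refine Finset.prod_congr rfl fun i _ => ?_
    have : -γ - (i : ℝ) = -(γ + (i : ℝ)) := by ring
    rw [this, abs_neg, abs_of_pos (by positivity)]
  rw [h1]
  have h2 : |v ^ (-γ - (j : ℝ))| = v ^ (-γ - (j : ℝ)) :=
    abs_of_pos (Real.rpow_pos_of_pos hv0 _)
  rw [h2]
  have hj : (0:ℝ) ≤ (j : ℝ) := Nat.cast_nonneg j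
  have h3 : v ^ (-γ - (j : ℝ)) ≤ a ^ (-γ - (j : ℝ)) :=
    Real.rpow_le_rpow_of_nonpos ha hv (by linarith)
  exact mul_le_mul_of_nonneg_left h3
    (Finset.prod_nonneg fun i _ => by positivity)


/-- Lipschitz bound for `pd γ j` on `[a,b]`. -/
lemma lip_pd {γ a b : ℝ} (hγ : 0 < γ) (ha : 0 < a) (j : ℕ) {x y : ℝ}
    (hx : x ∈ Icc a b) (hy : y ∈ Icc a b) :
    |pd γ j x - pd γ j y| ≤ Kp γ a (j + 1) * |x - y| := by
  have h := Convex.norm_image_sub_le_of_norm_hasDerivWithin_le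
    (f := pd γ j) (f' := pd γ (j + 1)) (s := Icc a b)
    (fun z hz => (pd_hasDerivAt γ j (ne_of_gt (lt_of_lt_of_le ha hz.1))).hasDerivWithinAt)
    (fun z hz => by
      simpa using abs_pd_le hγ ha (j + 1) hz.1)
    (convex_Icc a b) hy hx
  simpa [Real.norm_eq_abs] using h

lemma lip_pres {γ a b : ℝ} (hγ : 0 < γ) (ha : 0 < a) {x y : ℝ}
    (hx : x ∈ Icc a b) (hy : y ∈ Icc a b) :
    |pres γ x - pres γ y| ≤ Kp γ a 1 * |x - y| := by
  have := lip_pd hγ ha 0 hx hy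
  rwa [pd_zero] at this

section Ctx

variable {γ μ lam a b vm vp τ : ℝ}

lemma delta_pos (hγ : 0 < γ) (hvm : 0 < vm) (h2 : vm < vp) :
    0 < shockDelta γ vm vp := by
  have := Real.rpow_lt_rpow_of_neg hvm h2 (neg_neg_iff_pos.mpr hγ)
  simpa [shockDelta, pres] using sub_pos.mpr this

lemma sigma_sq (hγ : 0 < γ) (hvm : 0 < vm) (h2 : vm < vp) :
    sigmaStar γ vm vp ^ 2 = shockDelta γ vm vp / (vp - vm) := by
  have hd := delta_pos hγ hvm h2
  have : (0:ℝ) ≤ (pres γ vm - pres γ vp) / (vp - vm) := by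
    apply div_nonneg
    · exact le_of_lt hd
    · linarith
  rw [sigmaStar, Real.sq_sqrt this]
  rfl

lemma sigma_nonneg : 0 ≤ sigmaStar γ vm vp := Real.sqrt_nonneg _

lemma sigma_pos (hγ : 0 < γ) (hvm : 0 < vm) (h2 : vm < vp) :
    0 < sigmaStar γ vm vp := by
  apply Real.sqrt_pos.mpr
  exact div_pos (delta_pos hγ hvm h2) (by linarith)

lemma exists_mvt (hγ : 0 < γ) (hvm : 0 < vm) (h2 : vm < vp) :
    ∃ c ∈ Ioo vm vp, sigmaStar γ vm vp ^ 2 = -pd γ 1 c := by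
  obtain ⟨c, hc, hceq⟩ := exists_hasDerivAt_eq_slope (pres γ) (pd γ 1) h2
    (fun x hx => (pres_hasDerivAt γ (ne_of_gt (lt_of_lt_of_le hvm hx.1))).continuousAt.continuousWithinAt)
    (fun x hx => pres_hasDerivAt γ (ne_of_gt (lt_of_lt_of_le hvm hx.1.le)))
  refine ⟨c, hc, ?_⟩
  rw [sigma_sq hγ hvm h2, hceq, shockDelta]
  ring

/-- Lower bound for `-p'` on `[a,b]`. -/
noncomputable def Kq (γ b : ℝ) : ℝ := γ * b ^ (-γ - 1)

lemma Kq_pos (hγ : 0 < γ) (hb : 0 < b) : 0 < Kq γ b := by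
  unfold Kq; positivity

lemma sigma_sq_le (hγ : 0 < γ) (ha : 0 < a) (h1 : a ≤ vm) (h2 : vm < vp) (h3 : vp ≤ b) :
    sigmaStar γ vm vp ^ 2 ≤ Kp γ a 1 := by
  have hvm : 0 < vm := lt_of_lt_of_le ha h1
  obtain ⟨c, hc, hceq⟩ := exists_mvt hγ hvm h2
  have hca : a ≤ c := le_trans h1 hc.1.le
  calc sigmaStar γ vm vp ^ 2 = -pd γ 1 c := hceq
    _ ≤ |pd γ 1 c| := neg_le_abs _
    _ ≤ Kp γ a 1 := abs_pd_le hγ ha 1 hca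

lemma Kq_le_sigma_sq (hγ : 0 < γ) (ha : 0 < a) (h1 : a ≤ vm) (h2 : vm < vp) (h3 : vp ≤ b) :
    Kq γ b ≤ sigmaStar γ vm vp ^ 2 := by
  have hvm : 0 < vm := lt_of_lt_of_le ha h1
  obtain ⟨c, hc, hceq⟩ := exists_mvt hγ hvm h2
  have hc0 : 0 < c := lt_trans hvm hc.1
  have hcb : c ≤ b := le_trans hc.2.le h3
  have : b ^ (-γ - 1) ≤ c ^ (-γ - 1) :=
    Real.rpow_le_rpow_of_nonpos hc0 hcb (by linarith)
  rw [hceq, pd_one]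
  have : γ * b ^ (-γ - 1) ≤ γ * c ^ (-γ - 1) := by
    exact mul_le_mul_of_nonneg_left this hγ.le
  unfold Kq
  linarith

lemma sigma_le (hγ : 0 < γ) (ha : 0 < a) (h1 : a ≤ vm) (h2 : vm < vp) (h3 : vp ≤ b) :
    sigmaStar γ vm vp ≤ Real.sqrt (Kp γ a 1) := by
  have := Real.sqrt_le_sqrt (sigma_sq_le hγ ha h1 h2 h3)
  rwa [Real.sqrt_sq sigma_nonneg] at this

lemma sqrt_Kq_le_sigma (hγ : 0 < γ) (ha : 0 < a) (h1 : a ≤ vm) (h2 : vm < vp) (h3 : vp ≤ b) :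
    Real.sqrt (Kq γ b) ≤ sigmaStar γ vm vp := by
  have := Real.sqrt_le_sqrt (Kq_le_sigma_sq hγ ha h1 h2 h3)
  rwa [Real.sqrt_sq sigma_nonneg] at this

lemma gap_le (hγ : 0 < γ) (ha : 0 < a) (h1 : a ≤ vm) (h2 : vm < vp) (h3 : vp ≤ b) :
    Kq γ b * (vp - vm) ≤ shockDelta γ vm vp := by
  have hvm : 0 < vm := lt_of_lt_of_le ha h1
  have hss := sigma_sq hγ hvm h2
  have hgap : (0:ℝ) < vp - vm := by linarith
  have hδ : sigmaStar γ vm vp ^ 2 * (vp - vm) = shockDelta γ vm vp := by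
    rw [hss]; field_simp
  have := mul_le_mul_of_nonneg_right (Kq_le_sigma_sq hγ ha h1 h2 h3) hgap.le
  linarith


lemma pres_convexOn (hγ : 0 < γ) : ConvexOn ℝ (Ioi 0) (pres γ) := by
  have hint : interior (Ioi (0:ℝ)) = Ioi 0 := interior_Ioi
  refine convexOn_of_hasDerivWithinAt2_nonneg (convex_Ioi 0)
    (f' := pd γ 1) (f'' := pd γ 2) ?_ ?_ ?_ ?_
  · intro x hx
    exact (pres_hasDerivAt γ (ne_of_gt hx)).continuousAt.continuousWithinAt
  · intro x hx
    rw [hint] at hx ⊢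
    exact (pres_hasDerivAt γ (ne_of_gt hx)).hasDerivWithinAt
  · intro x hx
    rw [hint] at hx ⊢
    exact (pd_hasDerivAt γ 1 (ne_of_gt hx)).hasDerivWithinAt
  · intro x hx
    rw [hint] at hx
    have h1 : pd γ 2 x = ((-γ - 0) * (-γ - 1)) * x ^ (-γ - (2:ℕ)) := by
      rw [pd, Finset.prod_range_succ, Finset.prod_range_one]
      push_cast
      ring_nf
    have h2 : (0:ℝ) < x ^ (-γ - ((2:ℕ):ℝ)) := Real.rpow_pos_of_pos hx _
    have h3 : (0:ℝ) < (-γ - 0) * (-γ - 1) := by nlinarith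
    rw [h1]
    positivity

lemma hfun_vm : hfun γ vm vp vm = 0 := by simp [hfun]

lemma hfun_vp (hγ : 0 < γ) (hvm : 0 < vm) (h2 : vm < vp) : hfun γ vm vp vp = 0 := by
  have hss := sigma_sq hγ hvm h2
  have hgap : vp - vm ≠ 0 := by intro h; linarith [h2]
  rw [hfun, hss, shockDelta]
  field_simp
  ring

lemma hfun_nonneg (hγ : 0 < γ) (ha : 0 < a) (h1 : a ≤ vm) (h2 : vm < vp)
    {v : ℝ} (hv : v ∈ Icc vm vp) :
    0 ≤ hfun γ vm vp v := by
  have hvm : 0 < vm := lt_of_lt_of_le ha h1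
  have hgap : (0:ℝ) < vp - vm := by linarith [h2]
  set t : ℝ := (v - vm) / (vp - vm) with ht
  have ht0 : 0 ≤ t := by
    apply div_nonneg _ hgap.le; linarith [hv.1]
  have ht1 : t ≤ 1 := by
    rw [div_le_one hgap]; linarith [hv.2]
  have hsum : (1 - t) + t = 1 := by ring
  have hvrep : (1 - t) * vm + t * vp = v := by
    rw [ht]
    field_simp
    ring
  have hconv := (pres_convexOn (γ := γ) hγ).2 (mem_Ioi.mpr hvm)
    (mem_Ioi.mpr (lt_trans hvm h2)) (by linarith : (0:ℝ) ≤ 1 - t) ht0 hsum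
  rw [smul_eq_mul, smul_eq_mul, smul_eq_mul, smul_eq_mul, hvrep] at hconv
  have hss := sigma_sq hγ hvm h2
  have hδ : sigmaStar γ vm vp ^ 2 * (vp - vm) = shockDelta γ vm vp := by
    rw [hss]; field_simp
  have hvmv : vm - v = -(t * (vp - vm)) := by
    have : t * (vp - vm) = v - vm := by
      rw [ht]; field_simp
    linarith
  rw [hfun]
  have hδdef : shockDelta γ vm vp = pres γ vm - pres γ vp := rfl
  nlinarith [hconv, hδ, hvmv]


lemma hder_eq (hγ : 0 < γ) {v : ℝ} (hv : 0 < v) :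
    hder γ vm vp v = -sigmaStar γ vm vp ^ 2 - pd γ 1 v := by
  rw [hder, deriv_pres γ (ne_of_gt hv)]

lemma abs_hder_le (hst : SmallTau γ μ lam vm vp τ) {v : ℝ} (hv : v ∈ Icc vm vp) :
    2 * τ * |hder γ vm vp v| ≤ 4 / 3 * μ + lam := by
  have h := hst.2.2 v hv
  have : |hder γ vm vp v| = |sigmaStar γ vm vp ^ 2 + deriv (pres γ) v| := by
    rw [hder]
    rw [show -sigmaStar γ vm vp ^ 2 - deriv (pres γ) v
      = -(sigmaStar γ vm vp ^ 2 + deriv (pres γ) v) by ring, abs_neg]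
  rw [this]
  exact h

lemma denLB (hγ : 0 < γ) (ha : 0 < a) (h1 : a ≤ vm) (h2 : vm < vp)
    (hst : SmallTau γ μ lam vm vp τ) {v : ℝ} (hv : v ∈ Icc vm vp) :
    sigmaStar γ vm vp * ((4 / 3 * μ + lam) / 2) ≤ profDen γ μ lam vm vp τ v := by
  have hσ : 0 ≤ sigmaStar γ vm vp := sigma_nonneg
  have hτ : 0 ≤ τ := hst.1
  have h5 := abs_hder_le hst hv
  have habs : |τ * sigmaStar γ vm vp * hder γ vm vp v|
      ≤ sigmaStar γ vm vp * ((4 / 3 * μ + lam) / 2) := by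
    rw [abs_mul, abs_mul, abs_of_nonneg hτ, abs_of_nonneg hσ]
    nlinarith [abs_nonneg (hder γ vm vp v)]
  have := neg_abs_le (τ * sigmaStar γ vm vp * hder γ vm vp v)
  rw [profDen]
  linarith

lemma denUB (hγ : 0 < γ) (ha : 0 < a) (h1 : a ≤ vm) (h2 : vm < vp)
    (hst : SmallTau γ μ lam vm vp τ) {v : ℝ} (hv : v ∈ Icc vm vp) :
    profDen γ μ lam vm vp τ v ≤ sigmaStar γ vm vp * (3 / 2 * (4 / 3 * μ + lam)) := by
  have hσ : 0 ≤ sigmaStar γ vm vp := sigma_nonneg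
  have hτ : 0 ≤ τ := hst.1
  have h5 := abs_hder_le hst hv
  have habs : |τ * sigmaStar γ vm vp * hder γ vm vp v|
      ≤ sigmaStar γ vm vp * ((4 / 3 * μ + lam) / 2) := by
    rw [abs_mul, abs_mul, abs_of_nonneg hτ, abs_of_nonneg hσ]
    nlinarith [abs_nonneg (hder γ vm vp v)]
  have := le_abs_self (τ * sigmaStar γ vm vp * hder γ vm vp v)
  rw [profDen]
  linarith

lemma den_pos (hγ : 0 < γ) (hμ : 0 < μ) (hlam : 0 < lam) (ha : 0 < a) (h1 : a ≤ vm)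
    (h2 : vm < vp) (hst : SmallTau γ μ lam vm vp τ) {v : ℝ} (hv : v ∈ Icc vm vp) :
    0 < profDen γ μ lam vm vp τ v := by
  have := denLB hγ ha h1 h2 hst hv
  have hσ : 0 < sigmaStar γ vm vp := sigma_pos hγ (lt_of_lt_of_le ha h1) h2
  nlinarith

lemma small_h (hγ : 0 < γ) (ha : 0 < a) (h1 : a ≤ vm) (h2 : vm < vp) (h3 : vp ≤ b)
    {v : ℝ} (hv : v ∈ Icc vm vp) :
    |hfun γ vm vp v| ≤ 2 * Kp γ a 1 / Kq γ b * shockDelta γ vm vp := by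
  have hvm : 0 < vm := lt_of_lt_of_le ha h1
  have hvab : v ∈ Icc a b := ⟨le_trans h1 hv.1, le_trans hv.2 h3⟩
  have hmab : vm ∈ Icc a b := ⟨h1, le_trans (le_of_lt h2) h3⟩
  have e2 : |pres γ vm - pres γ v| ≤ Kp γ a 1 * (v - vm) := by
    have := lip_pres hγ ha hmab hvab
    rwa [abs_of_nonpos (by linarith [hv.1] : vm - v ≤ 0), neg_sub] at this
  have e1 : |sigmaStar γ vm vp ^ 2 * (vm - v)| = sigmaStar γ vm vp ^ 2 * (v - vm) := by
    rw [abs_mul, abs_of_nonneg (sq_nonneg _), abs_of_nonpos (by linarith [hv.1] : vm - v ≤ 0)]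
    ring
  have e3 : |hfun γ vm vp v| ≤ (sigmaStar γ vm vp ^ 2 + Kp γ a 1) * (v - vm) := by
    rw [hfun]
    calc |sigmaStar γ vm vp ^ 2 * (vm - v) + (pres γ vm - pres γ v)|
        ≤ |sigmaStar γ vm vp ^ 2 * (vm - v)| + |pres γ vm - pres γ v| := abs_add_le _ _
      _ ≤ _ := by rw [e1]; nlinarith [e2]
  have e4 : (sigmaStar γ vm vp ^ 2 + Kp γ a 1) * (v - vm) ≤ 2 * Kp γ a 1 * (vp - vm) := by
    have hσle := sigma_sq_le hγ ha h1 h2 h3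
    have := sq_nonneg (sigmaStar γ vm vp)
    nlinarith [hv.1, hv.2, Kp_pos hγ ha 1]
  have hKq := Kq_pos hγ (lt_of_lt_of_le (lt_of_lt_of_le (lt_of_lt_of_le ha h1) h2.le) h3)
  have hgl := gap_le hγ ha h1 h2 h3
  have e5 : 2 * Kp γ a 1 * (vp - vm) ≤ 2 * Kp γ a 1 / Kq γ b * shockDelta γ vm vp := by
    rw [div_mul_eq_mul_div, le_div_iff₀ hKq]
    nlinarith [Kp_pos hγ ha 1]
  linarith

lemma small_hd (hγ : 0 < γ) (ha : 0 < a) (h1 : a ≤ vm) (h2 : vm < vp) (h3 : vp ≤ b)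
    {v : ℝ} (hv : v ∈ Icc vm vp) :
    |-sigmaStar γ vm vp ^ 2 - pd γ 1 v| ≤ Kp γ a 2 / Kq γ b * shockDelta γ vm vp := by
  have hvm : 0 < vm := lt_of_lt_of_le ha h1
  obtain ⟨c, hc, hceq⟩ := exists_mvt hγ hvm h2
  have hcab : c ∈ Icc a b := ⟨le_trans h1 hc.1.le, le_trans hc.2.le h3⟩
  have hvab : v ∈ Icc a b := ⟨le_trans h1 hv.1, le_trans hv.2 h3⟩
  have e1 : |-sigmaStar γ vm vp ^ 2 - pd γ 1 v| = |pd γ 1 c - pd γ 1 v| := by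
    rw [hceq]; ring_nf
  have e2 := lip_pd hγ ha 1 hcab hvab
  have e3 : |c - v| ≤ vp - vm := by
    rw [abs_le]
    constructor <;> nlinarith [hc.1, hc.2, hv.1, hv.2]
  have hKq := Kq_pos hγ (lt_of_lt_of_le (lt_of_lt_of_le (lt_of_lt_of_le ha h1) h2.le) h3)
  have hgl := gap_le hγ ha h1 h2 h3
  have hKp2 := Kp_pos hγ ha 2
  have e4 : Kp γ a 2 * (vp - vm) ≤ Kp γ a 2 / Kq γ b * shockDelta γ vm vp := by
    rw [div_mul_eq_mul_div, le_div_iff₀ hKq]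
    nlinarith
  calc |-sigmaStar γ vm vp ^ 2 - pd γ 1 v| = |pd γ 1 c - pd γ 1 v| := e1
    _ ≤ Kp γ a 2 * |c - v| := e2
    _ ≤ Kp γ a 2 * (vp - vm) := by nlinarith
    _ ≤ _ := e4

end Ctx

/-- Symbolic expressions for functions of `v` arising as derivatives of the profile. -/
inductive Expr where
  | H : Expr
  | HD : Expr
  | PJ : ℕ → Expr
  | BETA : Expr
  | IDEN : Expr
  | const : ℝ → Expr
  | add : Expr → Expr → Expr
  | mul : Expr → Expr → Expr
  | neg : Expr → Expr

namespace Expr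

noncomputable def eval (γ μ lam vm vp τ : ℝ) : Expr → ℝ → ℝ
  | .H => hfun γ vm vp
  | .HD => fun v => -sigmaStar γ vm vp ^ 2 - pd γ 1 v
  | .PJ j => pd γ j
  | .BETA => fun _ => τ * sigmaStar γ vm vp
  | .IDEN => fun v => (profDen γ μ lam vm vp τ v)⁻¹
  | .const r => fun _ => r
  | .add e₁ e₂ => fun v => eval γ μ lam vm vp τ e₁ v + eval γ μ lam vm vp τ e₂ v
  | .mul e₁ e₂ => fun v => eval γ μ lam vm vp τ e₁ v * eval γ μ lam vm vp τ e₂ v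
  | .neg e => fun v => -eval γ μ lam vm vp τ e v

/-- Formal derivative. -/
noncomputable def Dx : Expr → Expr
  | .H => .HD
  | .HD => .neg (.PJ 2)
  | .PJ j => .PJ (j + 1)
  | .BETA => .const 0
  | .IDEN => .mul .BETA (.mul (.PJ 2) (.mul .IDEN .IDEN))
  | .const _ => .const 0
  | .add e₁ e₂ => .add (Dx e₁) (Dx e₂)
  | .mul e₁ e₂ => .add (.mul (Dx e₁) e₂) (.mul e₁ (Dx e₂))
  | .neg e => .neg (Dx e)

/-- Uniform bound for the evaluation on `[vm, vp]`. -/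
noncomputable def Mb (γ μ lam a b : ℝ) : Expr → ℝ
  | .H => 2 * Kp γ a 1 * (b - a)
  | .HD => 2 * Kp γ a 1
  | .PJ j => Kp γ a j
  | .BETA => Real.sqrt (Kp γ a 1)
  | .IDEN => 2 / (Real.sqrt (Kq γ b) * (4 / 3 * μ + lam))
  | .const r => |r|
  | .add e₁ e₂ => Mb γ μ lam a b e₁ + Mb γ μ lam a b e₂
  | .mul e₁ e₂ => Mb γ μ lam a b e₁ * Mb γ μ lam a b e₂
  | .neg e => Mb γ μ lam a b e

end Expr

section EvalFacts

variable {γ μ lam a b vm vp τ : ℝ}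

lemma eval_bound (hγ : 0 < γ) (hμ : 0 < μ) (hlam : 0 < lam) (ha : 0 < a) (hab : a < b)
    (h1 : a ≤ vm) (h2 : vm < vp) (h3 : vp ≤ b) (hst : SmallTau γ μ lam vm vp τ)
    (e : Expr) {v : ℝ} (hv : v ∈ Icc vm vp) :
    |Expr.eval γ μ lam vm vp τ e v| ≤ Expr.Mb γ μ lam a b e := by
  have hvm : 0 < vm := lt_of_lt_of_le ha h1
  have hb : 0 < b := lt_trans ha hab
  have hva : a ≤ v := le_trans h1 hv.1
  induction e with
  | H =>
    have e2 : |pres γ vm - pres γ v| ≤ Kp γ a 1 * (b - a) := by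
      have := lip_pres hγ ha ⟨h1, le_trans h2.le h3⟩ ⟨hva, le_trans hv.2 h3⟩
      have e3 : |vm - v| ≤ b - a := by
        rw [abs_le]; constructor <;> nlinarith [hv.1, hv.2]
      nlinarith [Kp_pos hγ ha 1, abs_nonneg (vm - v)]
    have e1 : |sigmaStar γ vm vp ^ 2 * (vm - v)| ≤ Kp γ a 1 * (b - a) := by
      rw [abs_mul, abs_of_nonneg (sq_nonneg _)]
      have e3 : |vm - v| ≤ b - a := by
        rw [abs_le]; constructor <;> nlinarith [hv.1, hv.2]
      nlinarith [sigma_sq_le hγ ha h1 h2 h3, sq_nonneg (sigmaStar γ vm vp),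
        abs_nonneg (vm - v), Kp_pos hγ ha 1]
    calc |Expr.eval γ μ lam vm vp τ .H v|
        ≤ |sigmaStar γ vm vp ^ 2 * (vm - v)| + |pres γ vm - pres γ v| := by
          rw [Expr.eval, hfun]; exact abs_add_le _ _
      _ ≤ 2 * Kp γ a 1 * (b - a) := by linarith
      _ = Expr.Mb γ μ lam a b .H := by rw [Expr.Mb]
  | HD =>
    rw [Expr.eval, Expr.Mb]
    calc |-sigmaStar γ vm vp ^ 2 - pd γ 1 v|
        ≤ |sigmaStar γ vm vp ^ 2| + |pd γ 1 v| := by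
          rw [show -sigmaStar γ vm vp ^ 2 - pd γ 1 v
            = -(sigmaStar γ vm vp ^ 2 + pd γ 1 v) by ring, abs_neg]
          exact abs_add_le _ _
      _ ≤ 2 * Kp γ a 1 := by
          rw [abs_of_nonneg (sq_nonneg _)]
          have := sigma_sq_le hγ ha h1 h2 h3
          have := abs_pd_le hγ ha 1 hva
          linarith
  | PJ j =>
    rw [Expr.eval, Expr.Mb]
    exact abs_pd_le hγ ha j hva
  | BETA =>
    rw [Expr.eval, Expr.Mb, abs_mul, abs_of_nonneg hst.1,
      abs_of_nonneg (sigma_nonneg (γ := γ) (vm := vm) (vp := vp))]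
    have h4 := sigma_le hγ ha h1 h2 h3
    have := sigma_nonneg (γ := γ) (vm := vm) (vp := vp)
    nlinarith [hst.2.1, Real.sqrt_nonneg (Kp γ a 1)]
  | IDEN =>
    rw [Expr.eval, Expr.Mb]
    have hdpos := den_pos hγ hμ hlam ha h1 h2 hst hv
    have hLB := denLB hγ ha h1 h2 hst hv
    have hq := sqrt_Kq_le_sigma hγ ha h1 h2 h3
    have hKqp : 0 < Real.sqrt (Kq γ b) := Real.sqrt_pos.mpr (Kq_pos hγ hb)
    have hA : 0 < 4 / 3 * μ + lam := by linarith
    have hLB2 : Real.sqrt (Kq γ b) * (4 / 3 * μ + lam) / 2 ≤ profDen γ μ lam vm vp τ v := by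
      have : Real.sqrt (Kq γ b) * ((4 / 3 * μ + lam) / 2)
          ≤ sigmaStar γ vm vp * ((4 / 3 * μ + lam) / 2) := by nlinarith
      linarith
    rw [abs_of_pos (inv_pos.mpr hdpos)]
    rw [show (2 : ℝ) / (Real.sqrt (Kq γ b) * (4 / 3 * μ + lam))
      = (Real.sqrt (Kq γ b) * (4 / 3 * μ + lam) / 2)⁻¹ by field_simp]
    exact inv_anti₀ (by positivity) hLB2
  | const r => rw [Expr.eval, Expr.Mb]
  | add e₁ e₂ ih₁ ih₂ =>
    rw [Expr.eval, Expr.Mb]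
    exact le_trans (abs_add_le _ _) (add_le_add ih₁ ih₂)
  | mul e₁ e₂ ih₁ ih₂ =>
    rw [Expr.eval, Expr.Mb, abs_mul]
    exact mul_le_mul ih₁ ih₂ (abs_nonneg _) (le_trans (abs_nonneg _) ih₁)
  | neg e ih =>
    rw [Expr.eval, Expr.Mb, abs_neg]
    exact ih

lemma Mb_nonneg (hγ : 0 < γ) (hμ : 0 < μ) (hlam : 0 < lam) (ha : 0 < a) (hab : a < b)
    (e : Expr) : 0 ≤ Expr.Mb γ μ lam a b e := by
  have hb : 0 < b := lt_trans ha hab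
  induction e with
  | H => rw [Expr.Mb]; nlinarith [Kp_pos hγ ha 1]
  | HD => rw [Expr.Mb]; nlinarith [Kp_pos hγ ha 1]
  | PJ j => exact (Kp_pos hγ ha j).le
  | BETA => exact Real.sqrt_nonneg _
  | IDEN => rw [Expr.Mb]; positivity
  | const r => exact abs_nonneg r
  | add e₁ e₂ ih₁ ih₂ => rw [Expr.Mb]; linarith
  | mul e₁ e₂ ih₁ ih₂ => rw [Expr.Mb]; exact mul_nonneg ih₁ ih₂
  | neg e ih => exact ih


lemma profDen_hasDerivAt (hγ : 0 < γ) {v : ℝ} (hv : 0 < v) :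
    HasDerivAt (profDen γ μ lam vm vp τ)
      (τ * sigmaStar γ vm vp * (-pd γ 2 v)) v := by
  have hg : HasDerivAt (fun x => sigmaStar γ vm vp * (4 / 3 * μ + lam)
      + τ * sigmaStar γ vm vp * (-sigmaStar γ vm vp ^ 2 - pd γ 1 x))
      (τ * sigmaStar γ vm vp * (-pd γ 2 v)) v := by
    have h1 : HasDerivAt (fun x => -sigmaStar γ vm vp ^ 2 - pd γ 1 x) (-pd γ 2 v) v := by
      simpa using ((pd_hasDerivAt γ 1 (ne_of_gt hv)).const_sub (-sigmaStar γ vm vp ^ 2))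
    simpa using (h1.const_mul (τ * sigmaStar γ vm vp)).const_add
      (sigmaStar γ vm vp * (4 / 3 * μ + lam))
  apply hg.congr_of_eventuallyEq
  filter_upwards [Ioi_mem_nhds hv] with x hx
  rw [profDen, hder_eq hγ hx]

lemma eval_hasDerivAt (hγ : 0 < γ) (e : Expr) {v : ℝ} (hv : 0 < v)
    (hden : profDen γ μ lam vm vp τ v ≠ 0) :
    HasDerivAt (Expr.eval γ μ lam vm vp τ e)
      (Expr.eval γ μ lam vm vp τ (Expr.Dx e) v) v := by
  induction e with
  | H =>
    have h1 : HasDerivAt (fun x => sigmaStar γ vm vp ^ 2 * (vm - x)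
        + (pres γ vm - pres γ x))
        (sigmaStar γ vm vp ^ 2 * (0 - 1) + (0 - pd γ 1 v)) v := by
      exact (((hasDerivAt_const v vm).sub (hasDerivAt_id v)).const_mul _).add
        ((hasDerivAt_const v (pres γ vm)).sub (pres_hasDerivAt γ (ne_of_gt hv)))
    have h2 : sigmaStar γ vm vp ^ 2 * (0 - 1) + (0 - pd γ 1 v)
        = Expr.eval γ μ lam vm vp τ (Expr.Dx .H) v := by
      rw [Expr.Dx, Expr.eval]; ring
    rw [← h2]
    exact h1
  | HD =>
    have h1 : HasDerivAt (fun x => -sigmaStar γ vm vp ^ 2 - pd γ 1 x) (-pd γ 2 v) v := by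
      simpa using ((pd_hasDerivAt γ 1 (ne_of_gt hv)).const_sub (-sigmaStar γ vm vp ^ 2))
    exact h1
  | PJ j => exact pd_hasDerivAt γ j (ne_of_gt hv)
  | BETA => exact hasDerivAt_const v _
  | IDEN =>
    have h1 := (profDen_hasDerivAt (μ := μ) (lam := lam) (τ := τ) hγ hv).inv hden
    have h2 : -(τ * sigmaStar γ vm vp * (-pd γ 2 v)) / profDen γ μ lam vm vp τ v ^ 2
        = Expr.eval γ μ lam vm vp τ (Expr.Dx .IDEN) v := by
      rw [Expr.Dx]
      show _ = (fun _ => τ * sigmaStar γ vm vp) v *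
        (pd γ 2 v * ((profDen γ μ lam vm vp τ v)⁻¹ * (profDen γ μ lam vm vp τ v)⁻¹))
      rw [pow_two, div_eq_mul_inv, mul_inv]
      ring
    rw [← h2]
    exact h1
  | const r => exact hasDerivAt_const v r
  | add e₁ e₂ ih₁ ih₂ => exact ih₁.add ih₂
  | mul e₁ e₂ ih₁ ih₂ => exact ih₁.mul ih₂
  | neg e ih => exact ih.neg


/-- "Of order δ uniformly": pointwise bound by a constant times the shock strength. -/
def SmallE (γ μ lam a b : ℝ) (e : Expr) : Prop :=
  ∃ C, 0 ≤ C ∧ ∀ vm vp τ v : ℝ, a ≤ vm → vm < vp → vp ≤ b →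
    SmallTau γ μ lam vm vp τ → v ∈ Icc vm vp →
    |Expr.eval γ μ lam vm vp τ e v| ≤ C * shockDelta γ vm vp

variable (γ μ lam a b) in
lemma smallE_H (hγ : 0 < γ) (ha : 0 < a) (hab : a < b) : SmallE γ μ lam a b Expr.H := by
  refine ⟨2 * Kp γ a 1 / Kq γ b, ?_, ?_⟩
  · exact div_nonneg (by nlinarith [Kp_pos (a := a) hγ ha 1])
      (Kq_pos (b := b) hγ (lt_trans ha hab)).le
  · intro vm vp τ v h1 h2 h3 _ hv
    exact small_h hγ ha h1 h2 h3 hv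

variable (γ μ lam a b) in
lemma smallE_HD (hγ : 0 < γ) (ha : 0 < a) (hab : a < b) : SmallE γ μ lam a b Expr.HD := by
  refine ⟨Kp γ a 2 / Kq γ b, ?_, ?_⟩
  · exact div_nonneg (Kp_pos (a := a) hγ ha 2).le
      (Kq_pos (b := b) hγ (lt_trans ha hab)).le
  · intro vm vp τ v h1 h2 h3 _ hv
    exact small_hd hγ ha h1 h2 h3 hv

lemma smallE_add {e₁ e₂ : Expr} (h₁ : SmallE γ μ lam a b e₁) (h₂ : SmallE γ μ lam a b e₂) :
    SmallE γ μ lam a b (Expr.add e₁ e₂) := by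
  obtain ⟨C₁, hC₁, hb₁⟩ := h₁
  obtain ⟨C₂, hC₂, hb₂⟩ := h₂
  refine ⟨C₁ + C₂, by linarith, ?_⟩
  intro vm vp τ v h1 h2 h3 hst hv
  have := hb₁ vm vp τ v h1 h2 h3 hst hv
  have := hb₂ vm vp τ v h1 h2 h3 hst hv
  calc |Expr.eval γ μ lam vm vp τ (.add e₁ e₂) v|
      ≤ |Expr.eval γ μ lam vm vp τ e₁ v| + |Expr.eval γ μ lam vm vp τ e₂ v| := by
        rw [Expr.eval]; exact abs_add_le _ _
    _ ≤ (C₁ + C₂) * shockDelta γ vm vp := by linarith [this]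

lemma smallE_neg {e : Expr} (h : SmallE γ μ lam a b e) :
    SmallE γ μ lam a b (Expr.neg e) := by
  obtain ⟨C, hC, hb⟩ := h
  exact ⟨C, hC, fun vm vp τ v h1 h2 h3 hst hv => by
    rw [Expr.eval, abs_neg]; exact hb vm vp τ v h1 h2 h3 hst hv⟩

lemma smallE_mul_left (hγ : 0 < γ) (hμ : 0 < μ) (hlam : 0 < lam) (ha : 0 < a) (hab : a < b)
    {e₁ : Expr} (e₂ : Expr) (h₁ : SmallE γ μ lam a b e₁) :
    SmallE γ μ lam a b (Expr.mul e₁ e₂) := by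
  obtain ⟨C₁, hC₁, hb₁⟩ := h₁
  refine ⟨C₁ * Expr.Mb γ μ lam a b e₂, mul_nonneg hC₁ (Mb_nonneg hγ hμ hlam ha hab e₂), ?_⟩
  intro vm vp τ v h1 h2 h3 hst hv
  have hδ := (delta_pos hγ (lt_of_lt_of_le ha h1) h2).le
  have hx₁ := hb₁ vm vp τ v h1 h2 h3 hst hv
  have hx₂ := eval_bound hγ hμ hlam ha hab h1 h2 h3 hst e₂ hv
  rw [Expr.eval, abs_mul]
  calc |Expr.eval γ μ lam vm vp τ e₁ v| * |Expr.eval γ μ lam vm vp τ e₂ v|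
      ≤ (C₁ * shockDelta γ vm vp) * Expr.Mb γ μ lam a b e₂ := by
        exact mul_le_mul hx₁ hx₂ (abs_nonneg _) (by positivity)
    _ = C₁ * Expr.Mb γ μ lam a b e₂ * shockDelta γ vm vp := by ring

lemma smallE_mul_right (hγ : 0 < γ) (hμ : 0 < μ) (hlam : 0 < lam) (ha : 0 < a) (hab : a < b)
    (e₁ : Expr) {e₂ : Expr} (h₂ : SmallE γ μ lam a b e₂) :
    SmallE γ μ lam a b (Expr.mul e₁ e₂) := by
  obtain ⟨C₂, hC₂, hb₂⟩ := h₂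
  refine ⟨Expr.Mb γ μ lam a b e₁ * C₂,
    mul_nonneg (Mb_nonneg hγ hμ hlam ha hab e₁) hC₂, ?_⟩
  intro vm vp τ v h1 h2 h3 hst hv
  have hδ := (delta_pos hγ (lt_of_lt_of_le ha h1) h2).le
  have hx₂ := hb₂ vm vp τ v h1 h2 h3 hst hv
  have hx₁ := eval_bound hγ hμ hlam ha hab h1 h2 h3 hst e₁ hv
  rw [Expr.eval, abs_mul]
  calc |Expr.eval γ μ lam vm vp τ e₁ v| * |Expr.eval γ μ lam vm vp τ e₂ v|
      ≤ Expr.Mb γ μ lam a b e₁ * (C₂ * shockDelta γ vm vp) := by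
        exact mul_le_mul hx₁ hx₂ (abs_nonneg _) (le_trans (abs_nonneg _) hx₁)
    _ = Expr.Mb γ μ lam a b e₁ * C₂ * shockDelta γ vm vp := by ring

/-- The symbolic expression for the `m`-th derivative of `h(v^s)` (as a function of `v`). -/
noncomputable def Em : ℕ → Expr
  | 0 => .H
  | m + 1 => .mul (Expr.Dx (Em m)) (.mul .H .IDEN)

lemma smallE_Dx_Em (hγ : 0 < γ) (hμ : 0 < μ) (hlam : 0 < lam) (ha : 0 < a) (hab : a < b) :
    ∀ m : ℕ, SmallE γ μ lam a b (Expr.Dx (Em m))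
  | 0 => smallE_HD γ μ lam a b hγ ha hab
  | (m + 1) => by
    show SmallE γ μ lam a b (Expr.Dx (.mul (Expr.Dx (Em m)) (.mul .H .IDEN)))
    rw [Expr.Dx]
    apply smallE_add
    · exact smallE_mul_right hγ hμ hlam ha hab _
        (smallE_mul_left hγ hμ hlam ha hab _ (smallE_H γ μ lam a b hγ ha hab))
    · exact smallE_mul_left hγ hμ hlam ha hab _ (smallE_Dx_Em hγ hμ hlam ha hab m)

end EvalFacts



section Main

variable {γ μ lam a b : ℝ}

/-- Derivative representation of `r · h(v^s)`. -/
lemma iteratedDeriv_rep (hγ : 0 < γ) (hμ : 0 < μ) (hlam : 0 < lam) (ha : 0 < a)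
    {vm vp τ : ℝ} {vs : ℝ → ℝ}
    (h1 : a ≤ vm) (h2 : vm < vp) (hst : SmallTau γ μ lam vm vp τ)
    (hprof : IsShockProfile γ μ lam vm vp τ vs) (r : ℝ) :
    ∀ n : ℕ, iteratedDeriv n (fun ξ => r * hfun γ vm vp (vs ξ))
      = fun ξ => r * Expr.eval γ μ lam vm vp τ (Em n) (vs ξ) := by
  intro n
  induction n with
  | zero =>
    funext ξ
    simp [iteratedDeriv_zero, Em, Expr.eval]
  | succ n ih =>
    funext ξ
    rw [iteratedDeriv_succ, ih]
    have hIcc : vs ξ ∈ Icc vm vp := ⟨(hprof.1 ξ).1.le, (hprof.1 ξ).2.le⟩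
    have hv : 0 < vs ξ := lt_of_lt_of_le (lt_of_lt_of_le ha h1) hIcc.1
    have hden : profDen γ μ lam vm vp τ (vs ξ) ≠ 0 :=
      (den_pos hγ hμ hlam ha h1 h2 hst hIcc).ne'
    have hcomp := ((eval_hasDerivAt hγ (Em n) hv hden).comp ξ (hprof.2.1 ξ)).const_mul r
    have hval : r * (Expr.eval γ μ lam vm vp τ (Expr.Dx (Em n)) (vs ξ) *
        (hfun γ vm vp (vs ξ) / profDen γ μ lam vm vp τ (vs ξ)))
        = r * Expr.eval γ μ lam vm vp τ (Em (n + 1)) (vs ξ) := by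
      show _ = r * Expr.eval γ μ lam vm vp τ
        (.mul (Expr.Dx (Em n)) (.mul .H .IDEN)) (vs ξ)
      rw [Expr.eval, Expr.eval, div_eq_mul_inv]
      show _ = r * (_ * (hfun γ vm vp (vs ξ) * (profDen γ μ lam vm vp τ (vs ξ))⁻¹))
      ring
    rw [← hval]
    exact hcomp.deriv

end Main

end ShockAux

open ShockAux ShockAux.Expr

/-- bounds for the stress profiles: `|Π₁₁^s| + |Π₂^s| ≤ C (v^s)′` with `C`
independent of τ, and for every `k ≥ 2` a τ-independent `C_k` with
`|(Π₁₁^s)^{(k-1)}| + |(Π₂^s)^{(k-1)}| ≤ C_k δ (v^s)′`. -/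
theorem shock_profile_stress_bounds
    (γ μ lam a b : ℝ) (hγ : 1 < γ) (hμ : 0 < μ) (hlam : 0 < lam)
    (ha : 0 < a) (hab : a < b) :
    ∃ C > 0, ∃ δ₀ > 0,
      (∀ vm vp τ : ℝ, ∀ vs : ℝ → ℝ,
        a ≤ vm → vm < vp → vp ≤ b → shockDelta γ vm vp ≤ δ₀ →
        SmallTau γ μ lam vm vp τ → IsShockProfile γ μ lam vm vp τ vs →
        ∀ ξ : ℝ,
          |Pi11s γ μ lam vm vp vs ξ| + |Pi2s γ μ lam vm vp vs ξ| ≤ C * deriv vs ξ) ∧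
      (∀ k : ℕ, 2 ≤ k → ∃ Ck > 0,
        ∀ vm vp τ : ℝ, ∀ vs : ℝ → ℝ,
          a ≤ vm → vm < vp → vp ≤ b → shockDelta γ vm vp ≤ δ₀ →
          SmallTau γ μ lam vm vp τ → IsShockProfile γ μ lam vm vp τ vs →
          ∀ ξ : ℝ,
            |iteratedDeriv (k - 1) (Pi11s γ μ lam vm vp vs) ξ| +
              |iteratedDeriv (k - 1) (Pi2s γ μ lam vm vp vs) ξ| ≤
              Ck * shockDelta γ vm vp * deriv vs ξ) := by
  have hγ0 : 0 < γ := lt_trans one_pos hγ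
  have hA : (0:ℝ) < 4 / 3 * μ + lam := by linarith
  have hKp1 : 0 < Kp γ a 1 := Kp_pos hγ0 ha 1
  have hsKp1 : 0 < Real.sqrt (Kp γ a 1) := Real.sqrt_pos.mpr hKp1
  have hc₁ : (0:ℝ) ≤ 4 / 3 * μ / (4 / 3 * μ + lam) := by positivity
  have hc₂ : (0:ℝ) ≤ lam / (4 / 3 * μ + lam) := by positivity
  have hc : 4 / 3 * μ / (4 / 3 * μ + lam) + lam / (4 / 3 * μ + lam) = 1 := by
    field_simp
  refine ⟨3 / 2 * (4 / 3 * μ + lam) * Real.sqrt (Kp γ a 1), by positivity, 1, one_pos,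
    ?_, ?_⟩
  · -- first bound
    intro vm vp τ vs h1 h2 h3 hδ hst hprof ξ
    have hIcc : vs ξ ∈ Set.Icc vm vp := ⟨(hprof.1 ξ).1.le, (hprof.1 ξ).2.le⟩
    have hnn : 0 ≤ hfun γ vm vp (vs ξ) := hfun_nonneg hγ0 ha h1 h2 hIcc
    have hdpos : 0 < profDen γ μ lam vm vp τ (vs ξ) :=
      den_pos hγ0 hμ hlam ha h1 h2 hst hIcc
    have hd : deriv vs ξ = hfun γ vm vp (vs ξ) / profDen γ μ lam vm vp τ (vs ξ) :=
      (hprof.2.1 ξ).deriv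
    have hsum : |Pi11s γ μ lam vm vp vs ξ| + |Pi2s γ μ lam vm vp vs ξ|
        = hfun γ vm vp (vs ξ) := by
      rw [Pi11s, Pi2s, abs_mul, abs_mul, abs_neg, abs_neg,
        abs_of_nonneg hc₁, abs_of_nonneg hc₂, abs_of_nonneg hnn]
      nlinarith [hnn, hc]
    rw [hsum]
    have hUB : profDen γ μ lam vm vp τ (vs ξ)
        ≤ 3 / 2 * (4 / 3 * μ + lam) * Real.sqrt (Kp γ a 1) := by
      have e1 := denUB hγ0 ha h1 h2 hst hIcc
      have e2 := sigma_le hγ0 ha h1 h2 h3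
      nlinarith [sigma_nonneg (γ := γ) (vm := vm) (vp := vp)]
    have e3 : hfun γ vm vp (vs ξ) / profDen γ μ lam vm vp τ (vs ξ)
        * profDen γ μ lam vm vp τ (vs ξ) = hfun γ vm vp (vs ξ) :=
      div_mul_cancel₀ _ hdpos.ne'
    have e4 : 0 ≤ hfun γ vm vp (vs ξ) / profDen γ μ lam vm vp τ (vs ξ) :=
      div_nonneg hnn hdpos.le
    calc hfun γ vm vp (vs ξ)
        = hfun γ vm vp (vs ξ) / profDen γ μ lam vm vp τ (vs ξ)
          * profDen γ μ lam vm vp τ (vs ξ) := e3.symm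
      _ ≤ hfun γ vm vp (vs ξ) / profDen γ μ lam vm vp τ (vs ξ)
          * (3 / 2 * (4 / 3 * μ + lam) * Real.sqrt (Kp γ a 1)) :=
          mul_le_mul_of_nonneg_left hUB e4
      _ = 3 / 2 * (4 / 3 * μ + lam) * Real.sqrt (Kp γ a 1) * deriv vs ξ := by
          rw [hd]; ring
  · -- higher derivatives
    intro k hk
    obtain ⟨C0, hC0, hb0⟩ := smallE_Dx_Em (γ := γ) (μ := μ) (lam := lam) (a := a) (b := b)
      hγ0 hμ hlam ha hab (k - 2)
    refine ⟨C0 + 1, by linarith, ?_⟩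
    intro vm vp τ vs h1 h2 h3 hδ hst hprof ξ
    have hm : k - 1 = (k - 2) + 1 := by omega
    rw [hm]
    have hIcc : vs ξ ∈ Set.Icc vm vp := ⟨(hprof.1 ξ).1.le, (hprof.1 ξ).2.le⟩
    have hnn : 0 ≤ hfun γ vm vp (vs ξ) := hfun_nonneg hγ0 ha h1 h2 hIcc
    have hdpos : 0 < profDen γ μ lam vm vp τ (vs ξ) :=
      den_pos hγ0 hμ hlam ha h1 h2 hst hIcc
    have hd : deriv vs ξ = hfun γ vm vp (vs ξ) / profDen γ μ lam vm vp τ (vs ξ) :=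
      (hprof.2.1 ξ).deriv
    have hδ0 : 0 ≤ shockDelta γ vm vp :=
      (delta_pos hγ0 (lt_of_lt_of_le ha h1) h2).le
    have e1 : iteratedDeriv ((k - 2) + 1) (Pi11s γ μ lam vm vp vs) ξ
        = -(4 / 3 * μ / (4 / 3 * μ + lam))
          * Expr.eval γ μ lam vm vp τ (Em ((k - 2) + 1)) (vs ξ) := by
      rw [show Pi11s γ μ lam vm vp vs
        = fun ξ => -(4 / 3 * μ / (4 / 3 * μ + lam)) * hfun γ vm vp (vs ξ) from rfl,
        iteratedDeriv_rep hγ0 hμ hlam ha h1 h2 hst hprof _ ((k - 2) + 1)]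
    have e2 : iteratedDeriv ((k - 2) + 1) (Pi2s γ μ lam vm vp vs) ξ
        = -(lam / (4 / 3 * μ + lam))
          * Expr.eval γ μ lam vm vp τ (Em ((k - 2) + 1)) (vs ξ) := by
      rw [show Pi2s γ μ lam vm vp vs
        = fun ξ => -(lam / (4 / 3 * μ + lam)) * hfun γ vm vp (vs ξ) from rfl,
        iteratedDeriv_rep hγ0 hμ hlam ha h1 h2 hst hprof _ ((k - 2) + 1)]
    rw [e1, e2, abs_mul, abs_mul, abs_neg, abs_neg,
      abs_of_nonneg hc₁, abs_of_nonneg hc₂]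
    have hsum : 4 / 3 * μ / (4 / 3 * μ + lam)
          * |Expr.eval γ μ lam vm vp τ (Em ((k - 2) + 1)) (vs ξ)|
        + lam / (4 / 3 * μ + lam)
          * |Expr.eval γ μ lam vm vp τ (Em ((k - 2) + 1)) (vs ξ)|
        = |Expr.eval γ μ lam vm vp τ (Em ((k - 2) + 1)) (vs ξ)| := by
      nlinarith [abs_nonneg (Expr.eval γ μ lam vm vp τ (Em ((k - 2) + 1)) (vs ξ)), hc]
    rw [hsum]
    have eE : Expr.eval γ μ lam vm vp τ (Em ((k - 2) + 1)) (vs ξ)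
        = Expr.eval γ μ lam vm vp τ (Expr.Dx (Em (k - 2))) (vs ξ)
          * (hfun γ vm vp (vs ξ) * (profDen γ μ lam vm vp τ (vs ξ))⁻¹) := by
      rw [show Em ((k - 2) + 1)
        = .mul (Expr.Dx (Em (k - 2))) (.mul .H .IDEN) from rfl]
      rw [Expr.eval, Expr.eval]
      rfl
    have hprod : 0 ≤ hfun γ vm vp (vs ξ) * (profDen γ μ lam vm vp τ (vs ξ))⁻¹ :=
      mul_nonneg hnn (inv_nonneg.mpr hdpos.le)
    rw [eE, abs_mul, abs_of_nonneg hprod]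
    have hEb := hb0 vm vp τ (vs ξ) h1 h2 h3 hst hIcc
    have hdnn : 0 ≤ deriv vs ξ := by
      rw [hd]; exact div_nonneg hnn hdpos.le
    have hde : hfun γ vm vp (vs ξ) * (profDen γ μ lam vm vp τ (vs ξ))⁻¹ = deriv vs ξ := by
      rw [hd, div_eq_mul_inv]
    rw [hde]
    calc |Expr.eval γ μ lam vm vp τ (Expr.Dx (Em (k - 2))) (vs ξ)| * deriv vs ξ
        ≤ C0 * shockDelta γ vm vp * deriv vs ξ :=
          mul_le_mul_of_nonneg_right hEb hdnn
      _ ≤ (C0 + 1) * shockDelta γ vm vp * deriv vs ξ :=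
          mul_le_mul_of_nonneg_right
            (mul_le_mul_of_nonneg_right (by linarith) hδ0) hdnn
end

section
/- Let γ > 1, μ > 0, λ > 0, 0 < v_- < v_+, and let τ ≥ 0 satisfy the smallness condition. Let v^s : ℝ → (v_-, v_+) be differentiable with (v^s)′(ξ) = h(v^s(ξ))/(σ_*((4/3)μ+λ) + τσ_*h′(v^s(ξ))) for all ξ, and v^s → v_∓ as ξ → ∓∞. Fix u_{1-} ∈ ℝ and define u₁^s := u_{1-} − σ_*(v^s − v_-), Π₁₁^s := −((4/3)μ/((4/3)μ+λ)) h(v^s), Π₂^s := −(λ/((4/3)μ+λ)) h(v^s). Then for all ξ ∈ ℝ: (u₁^s)′(ξ) = −σ_*(v^s)′(ξ); −σ_*(u₁^s)′(ξ) + (p∘v^s)′(ξ) = (Π₁₁^s)′(ξ) + (Π₂^s)′(ξ); −τσ_*(Π₁₁^s)′(ξ) + Π₁₁^s(ξ) = (4μ/3)(u₁^s)′(ξ); −τσ_*(Π₂^s)′(ξ) + Π₂^s(ξ) = λ(u₁^s)′(ξ); moreover u₁^s(ξ) → u_{1-} and Π₁₁^s(ξ), Π₂^s(ξ) → 0 as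 ξ → −∞, and u₁^s(ξ) → u_{1+} := u_{1-} − σ_*(v_+ − v_-) and Π₁₁^s(ξ), Π₂^s(ξ) → 0 as ξ → +∞. -/
open Filter

section Aux


lemma pres_hasDerivAt (γ : ℝ) {v : ℝ} (hv : 0 < v) :
    HasDerivAt (pres γ) (deriv (pres γ) v) v :=
  ((Real.hasDerivAt_rpow_const (p := -γ) (Or.inl hv.ne')).differentiableAt).hasDerivAt

lemma hfun_hasDerivAt (γ vm vp : ℝ) {v : ℝ} (hv : 0 < v) :
    HasDerivAt (hfun γ vm vp) (hder γ vm vp v) v := by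
  have hp := pres_hasDerivAt γ hv
  have h1 : HasDerivAt (fun w => sigmaStar γ vm vp ^ 2 * (vm - w) + (pres γ vm - pres γ w))
      (sigmaStar γ vm vp ^ 2 * (0 - 1) + (0 - deriv (pres γ) v)) v :=
    (((hasDerivAt_const v vm).sub (hasDerivAt_id v)).const_mul _).add
      ((hasDerivAt_const v (pres γ vm)).sub hp)
  have heq : hder γ vm vp v = sigmaStar γ vm vp ^ 2 * (0 - 1) + (0 - deriv (pres γ) v) := by
    unfold hder; ring
  rw [heq]; exact h1

lemma sigma_pos {γ vm vp : ℝ} (hγ : 1 < γ) (hvm : 0 < vm) (hlt : vm < vp) :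
    0 < sigmaStar γ vm vp := by
  apply Real.sqrt_pos.mpr
  apply div_pos _ (sub_pos.mpr hlt)
  have : pres γ vp < pres γ vm := Real.rpow_lt_rpow_of_neg hvm hlt (by linarith)
  linarith

lemma sigma_sq {γ vm vp : ℝ} (hγ : 1 < γ) (hvm : 0 < vm) (hlt : vm < vp) :
    sigmaStar γ vm vp ^ 2 = (pres γ vm - pres γ vp) / (vp - vm) := by
  apply Real.sq_sqrt
  apply div_nonneg _ (by linarith)
  have : pres γ vp < pres γ vm := Real.rpow_lt_rpow_of_neg hvm hlt (by linarith)
  linarith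

lemma hfun_vm (γ vm vp : ℝ) : hfun γ vm vp vm = 0 := by simp [hfun]

lemma hfun_vp {γ vm vp : ℝ} (hγ : 1 < γ) (hvm : 0 < vm) (hlt : vm < vp) :
    hfun γ vm vp vp = 0 := by
  have hne : vp - vm ≠ 0 := sub_ne_zero.mpr (ne_of_gt hlt)
  unfold hfun
  rw [sigma_sq hγ hvm hlt]
  field_simp
  ring

lemma den_pos {γ μ lam vm vp τ : ℝ} (hγ : 1 < γ) (hvm : 0 < vm) (hlt : vm < vp) (hμ : 0 < μ) (hlam : 0 < lam)
    (hτ : SmallTau γ μ lam vm vp τ) {w : ℝ} (hw : w ∈ Set.Icc vm vp) :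
    0 < profDen γ μ lam vm vp τ w := by
  obtain ⟨hτ0, -, hsm⟩ := hτ
  have h := hsm w hw
  have hσ := sigma_pos hγ hvm hlt
  have habs : τ * (sigmaStar γ vm vp ^ 2 + deriv (pres γ) w)
      ≤ τ * |sigmaStar γ vm vp ^ 2 + deriv (pres γ) w| :=
    mul_le_mul_of_nonneg_left (le_abs_self _) hτ0
  have hkey : profDen γ μ lam vm vp τ w =
      sigmaStar γ vm vp * ((4 / 3 * μ + lam) - τ * (sigmaStar γ vm vp ^ 2 + deriv (pres γ) w)) := by
    unfold profDen hder; ring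
  rw [hkey]
  have hAbs0 : 0 ≤ |sigmaStar γ vm vp ^ 2 + deriv (pres γ) w| := abs_nonneg _
  exact mul_pos hσ (by nlinarith)

end Aux
lemma key_alg (c A τ σ hd h D : ℝ) (hA : A ≠ 0) (hD : D ≠ 0)
    (hDdef : D = σ * A + τ * σ * hd) :
    -(τ * σ) * (-(c / A) * (hd * (h / D))) + (-(c / A) * h) = c * (-(σ * (h / D))) := by
  subst hDdef
  field_simp
  have hX : (τ * σ * hd + σ * A) * (τ * σ * hd + σ * A)⁻¹ = 1 :=
    mul_inv_cancel₀ (by rwa [add_comm] at hD)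
  linear_combination (c * h) * hX


set_option maxHeartbeats 1000000 in
/-- the profile `(v^s, u₁^s, Π₁₁^s, Π₂^s)` built from a solution `v^s` of
the scalar profile ODE via `u₁^s = u₁₋ - σ*(v^s - v₋)`,
`Π₁₁^s = -((4/3)μ/((4/3)μ+λ))h(v^s)`, `Π₂^s = -(λ/((4/3)μ+λ))h(v^s)` satisfies the
traveling-wave system and has the correct far-field limits. -/
theorem shock_profile_system_and_limits
    (γ μ lam vm vp τ : ℝ) (hγ : 1 < γ) (hvm : 0 < vm) (hlt : vm < vp)
    (hμ : 0 < μ) (hlam : 0 < lam) (hτ : SmallTau γ μ lam vm vp τ)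
    (vs : ℝ → ℝ) (hrange : ∀ ξ, vs ξ ∈ Set.Ioo vm vp)
    (hode : ∀ ξ, HasDerivAt vs
      (hfun γ vm vp (vs ξ) / profDen γ μ lam vm vp τ (vs ξ)) ξ)
    (hbot : Tendsto vs atBot (nhds vm)) (htop : Tendsto vs atTop (nhds vp))
    (u1m : ℝ) :
    (∀ ξ, deriv (fun ζ => u1m - sigmaStar γ vm vp * (vs ζ - vm)) ξ =
      -sigmaStar γ vm vp * deriv vs ξ) ∧
    (∀ ξ, -sigmaStar γ vm vp *
        deriv (fun ζ => u1m - sigmaStar γ vm vp * (vs ζ - vm)) ξ +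
        deriv (fun ζ => pres γ (vs ζ)) ξ =
      deriv (fun ζ => -((4 / 3 * μ) / (4 / 3 * μ + lam)) * hfun γ vm vp (vs ζ)) ξ +
      deriv (fun ζ => -(lam / (4 / 3 * μ + lam)) * hfun γ vm vp (vs ζ)) ξ) ∧
    (∀ ξ, -(τ * sigmaStar γ vm vp) *
        deriv (fun ζ => -((4 / 3 * μ) / (4 / 3 * μ + lam)) * hfun γ vm vp (vs ζ)) ξ +
        (-((4 / 3 * μ) / (4 / 3 * μ + lam)) * hfun γ vm vp (vs ξ)) =
      4 * μ / 3 * deriv (fun ζ => u1m - sigmaStar γ vm vp * (vs ζ - vm)) ξ) ∧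
    (∀ ξ, -(τ * sigmaStar γ vm vp) *
        deriv (fun ζ => -(lam / (4 / 3 * μ + lam)) * hfun γ vm vp (vs ζ)) ξ +
        (-(lam / (4 / 3 * μ + lam)) * hfun γ vm vp (vs ξ)) =
      lam * deriv (fun ζ => u1m - sigmaStar γ vm vp * (vs ζ - vm)) ξ) ∧
    Tendsto (fun ζ => u1m - sigmaStar γ vm vp * (vs ζ - vm)) atBot (nhds u1m) ∧
    Tendsto (fun ζ => u1m - sigmaStar γ vm vp * (vs ζ - vm)) atTop
      (nhds (u1m - sigmaStar γ vm vp * (vp - vm))) ∧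
    Tendsto (fun ζ => -((4 / 3 * μ) / (4 / 3 * μ + lam)) * hfun γ vm vp (vs ζ)) atBot
      (nhds 0) ∧
    Tendsto (fun ζ => -((4 / 3 * μ) / (4 / 3 * μ + lam)) * hfun γ vm vp (vs ζ)) atTop
      (nhds 0) ∧
    Tendsto (fun ζ => -(lam / (4 / 3 * μ + lam)) * hfun γ vm vp (vs ζ)) atBot (nhds 0) ∧
    Tendsto (fun ζ => -(lam / (4 / 3 * μ + lam)) * hfun γ vm vp (vs ζ)) atTop (nhds 0) := by
  have hσ : 0 < sigmaStar γ vm vp := sigma_pos hγ hvm hlt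
  have hA : (0:ℝ) < 4 / 3 * μ + lam := by linarith
  have hvpos : ∀ ξ, 0 < vs ξ := fun ξ => hvm.trans (hrange ξ).1
  have hIcc : ∀ ξ, vs ξ ∈ Set.Icc vm vp := fun ξ => Set.Ioo_subset_Icc_self (hrange ξ)
  have hD : ∀ ξ, profDen γ μ lam vm vp τ (vs ξ) ≠ 0 :=
    fun ξ => (den_pos hγ hvm hlt hμ hlam hτ (hIcc ξ)).ne'
  have hu1 : ∀ ξ, HasDerivAt (fun ζ => u1m - sigmaStar γ vm vp * (vs ζ - vm))
      (-(sigmaStar γ vm vp *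
        (hfun γ vm vp (vs ξ) / profDen γ μ lam vm vp τ (vs ξ)))) ξ := by
    intro ξ
    have := (((hode ξ).sub_const vm).const_mul (sigmaStar γ vm vp)).const_sub u1m
    simpa using this
  have hhc : ∀ ξ, HasDerivAt (fun ζ => hfun γ vm vp (vs ζ))
      (hder γ vm vp (vs ξ) *
        (hfun γ vm vp (vs ξ) / profDen γ μ lam vm vp τ (vs ξ))) ξ :=
    fun ξ => (hfun_hasDerivAt γ vm vp (hvpos ξ)).comp ξ (hode ξ)
  have hpc : ∀ ξ, HasDerivAt (fun ζ => pres γ (vs ζ))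
      (deriv (pres γ) (vs ξ) *
        (hfun γ vm vp (vs ξ) / profDen γ μ lam vm vp τ (vs ξ))) ξ :=
    fun ξ => (pres_hasDerivAt γ (hvpos ξ)).comp ξ (hode ξ)
  have hP1 : ∀ ξ, HasDerivAt
      (fun ζ => -((4 / 3 * μ) / (4 / 3 * μ + lam)) * hfun γ vm vp (vs ζ))
      (-((4 / 3 * μ) / (4 / 3 * μ + lam)) * (hder γ vm vp (vs ξ) *
        (hfun γ vm vp (vs ξ) / profDen γ μ lam vm vp τ (vs ξ)))) ξ :=
    fun ξ => (hhc ξ).const_mul _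
  have hP2 : ∀ ξ, HasDerivAt
      (fun ζ => -(lam / (4 / 3 * μ + lam)) * hfun γ vm vp (vs ζ))
      (-(lam / (4 / 3 * μ + lam)) * (hder γ vm vp (vs ξ) *
        (hfun γ vm vp (vs ξ) / profDen γ μ lam vm vp τ (vs ξ)))) ξ :=
    fun ξ => (hhc ξ).const_mul _
  have hcontm : ContinuousAt (hfun γ vm vp) vm :=
    (hfun_hasDerivAt γ vm vp hvm).continuousAt
  have hcontp : ContinuousAt (hfun γ vm vp) vp :=
    (hfun_hasDerivAt γ vm vp (hvm.trans hlt)).continuousAt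
  refine ⟨?_, ?_, ?_, ?_, ?_, ?_, ?_, ?_, ?_, ?_⟩
  · intro ξ
    rw [(hu1 ξ).deriv, (hode ξ).deriv]
    ring
  · intro ξ
    rw [(hu1 ξ).deriv, (hpc ξ).deriv, (hP1 ξ).deriv, (hP2 ξ).deriv]
    have hsum : (4 / 3 * μ) / (4 / 3 * μ + lam) + lam / (4 / 3 * μ + lam) = 1 := by
      field_simp
    unfold hder
    linear_combination (-((sigmaStar γ vm vp ^ 2 + deriv (pres γ) (vs ξ)) *
      (hfun γ vm vp (vs ξ) / profDen γ μ lam vm vp τ (vs ξ)))) * hsum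
  · intro ξ
    rw [(hP1 ξ).deriv, (hu1 ξ).deriv]
    have hk := key_alg (4 / 3 * μ) (4 / 3 * μ + lam) τ (sigmaStar γ vm vp)
      (hder γ vm vp (vs ξ)) (hfun γ vm vp (vs ξ)) (profDen γ μ lam vm vp τ (vs ξ))
      hA.ne' (hD ξ) (by unfold profDen; ring)
    linear_combination hk
  · intro ξ
    rw [(hP2 ξ).deriv, (hu1 ξ).deriv]
    have hk := key_alg lam (4 / 3 * μ + lam) τ (sigmaStar γ vm vp)
      (hder γ vm vp (vs ξ)) (hfun γ vm vp (vs ξ)) (profDen γ μ lam vm vp τ (vs ξ))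
      hA.ne' (hD ξ) (by unfold profDen; ring)
    linear_combination hk
  · have := (tendsto_const_nhds (x := u1m) (f := atBot)).sub
      ((hbot.sub_const vm).const_mul (sigmaStar γ vm vp))
    simpa using this
  · exact tendsto_const_nhds.sub ((htop.sub_const vm).const_mul _)
  · have := (hcontm.tendsto.comp hbot).const_mul (-((4 / 3 * μ) / (4 / 3 * μ + lam)))
    simpa [Function.comp, hfun_vm] using this
  · have := (hcontp.tendsto.comp htop).const_mul (-((4 / 3 * μ) / (4 / 3 * μ + lam)))
    simpa [Function.comp, hfun_vp hγ hvm hlt] using this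
  · have := (hcontm.tendsto.comp hbot).const_mul (-(lam / (4 / 3 * μ + lam)))
    simpa [Function.comp, hfun_vm] using this
  · have := (hcontp.tendsto.comp htop).const_mul (-(lam / (4 / 3 * μ + lam)))
    simpa [Function.comp, hfun_vp hγ hvm hlt] using this
end

section
/- Let 0 < v_- < v_+ with δ := p(v_-) − p(v_+) ≤ 1, and let v^s : ℝ → [v_-, v_+] satisfy v_+ − v_- ≤ C₁δ, |v^s(ξ) − v_+| ≤ C₁δ e^{−δξ/C₁} for all ξ ≥ 0, and |v^s(ξ) − v_-| ≤ C₁δ e^{−δ|ξ|/C₁} for all ξ ≤ 0, for some constant C₁ > 0. Then there exists C > 0 depending only on C₁ such that for every s ∈ ℝ: ∫₀^∞ |v^s(x − s) − v_+|² dx ≤ Cδ(1 + |s|) and ∫_{−∞}^0 |v^s(x − s) − v_-|² dx ≤ Cδ(1 + |s|). -/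
open MeasureTheory

lemma aux_tail {A a M : ℝ} (hA : 0 ≤ A) (ha : 0 < a) (hM : 0 ≤ M) {f : ℝ → ℝ}
    (hf0 : ∀ x, 0 ≤ f x) (hfb : ∀ x, f x ≤ A)
    (hfe : ∀ x, M < x → f x ≤ A * Real.exp (-(a * (x - M)))) :
    (∫ x in Set.Ioi (0:ℝ), f x) ≤ A * M + A / a := by
  set g : ℝ → ℝ := fun x => min A (A * Real.exp (-(a * (x - M)))) with hg
  have hgcont : Continuous g :=
    continuous_const.min (continuous_const.mul (Real.continuous_exp.comp (by continuity)))
  have hgle : ∀ x, g x ≤ A * Real.exp (-(a * (x - M))) := fun x => min_le_right _ _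
  have hg0 : ∀ x, 0 ≤ g x := fun x => le_min (by positivity) (by positivity)
  have hexp_int : ∀ c : ℝ, IntegrableOn (fun x => A * Real.exp (-(a * (x - M)))) (Set.Ioi c) := by
    intro c
    have : (fun x : ℝ => A * Real.exp (-(a * (x - M)))) =
        fun x : ℝ => (A * Real.exp (a * M)) * Real.exp (-a * x) := by
      funext x; rw [mul_assoc, ← Real.exp_add]; ring_nf
    rw [this]
    exact (exp_neg_integrableOn_Ioi c ha).const_mul _
  have hgint : ∀ c : ℝ, IntegrableOn g (Set.Ioi c) := by
    intro c
    refine Integrable.mono' (hexp_int c) (hgcont.aestronglyMeasurable.restrict) ?_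
    filter_upwards with x
    rw [Real.norm_eq_abs, abs_of_nonneg (hg0 x)]
    exact hgle x
  have hfg : ∀ x, f x ≤ g x := by
    intro x
    rcases le_or_gt x M with h | h
    · refine le_min (hfb x) ?_
      calc f x ≤ A := hfb x
      _ ≤ A * Real.exp (-(a * (x - M))) := by
          nlinarith [Real.one_le_exp (by nlinarith : (0:ℝ) ≤ -(a * (x - M)))]
    · exact le_min (hfb x) (hfe x h)
  have step1 : (∫ x in Set.Ioi (0:ℝ), f x) ≤ ∫ x in Set.Ioi (0:ℝ), g x :=
    integral_mono_of_nonneg (Filter.Eventually.of_forall hf0) (hgint 0)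
      (Filter.Eventually.of_forall hfg)
  have split : (∫ x in Set.Ioi (0:ℝ), g x)
      = (∫ x in Set.Ioc 0 M, g x) + ∫ x in Set.Ioi M, g x := by
    rw [← setIntegral_union (Set.Ioc_disjoint_Ioi le_rfl) measurableSet_Ioi
      ((hgint 0).mono_set Set.Ioc_subset_Ioi_self) (hgint M), Set.Ioc_union_Ioi_eq_Ioi hM]
  have step2 : (∫ x in Set.Ioc 0 M, g x) ≤ A * M := by
    have : (∫ x in Set.Ioc 0 M, g x) ≤ ∫ _x in Set.Ioc 0 M, A := by
      refine integral_mono_of_nonneg (Filter.Eventually.of_forall hg0) ?_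
        (Filter.Eventually.of_forall fun x => min_le_left _ _)
      exact integrableOn_const (by simp [Real.volume_Ioc])
    calc (∫ x in Set.Ioc 0 M, g x) ≤ ∫ _x in Set.Ioc 0 M, A := this
    _ = M * A := by
        rw [setIntegral_const, measureReal_def, Real.volume_Ioc, smul_eq_mul, ENNReal.toReal_ofReal (by linarith)]
        ring_nf
    _ = A * M := by ring
  have step3 : (∫ x in Set.Ioi M, g x) ≤ A / a := by
    have h1 : (∫ x in Set.Ioi M, g x) ≤ ∫ x in Set.Ioi M, A * Real.exp (-(a * (x - M))) :=
      integral_mono_of_nonneg (Filter.Eventually.of_forall hg0) (hexp_int M)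
        (Filter.Eventually.of_forall hgle)
    have h2 : (∫ x in Set.Ioi M, A * Real.exp (-(a * (x - M)))) = A / a := by
      have e1 : (fun x : ℝ => A * Real.exp (-(a * (x - M)))) =
          fun x : ℝ => (A * Real.exp (a * M)) * Real.exp (-(a * x)) := by
        funext x; rw [mul_assoc, ← Real.exp_add]; ring_nf
      rw [e1, integral_const_mul]
      have e2 : (∫ x in Set.Ioi M, Real.exp (-(a * x)))
          = a⁻¹ • ∫ x in Set.Ioi (a * M), Real.exp (-x) :=
        integral_comp_mul_left_Ioi (fun y => Real.exp (-y)) M ha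
      rw [e2, integral_exp_neg_Ioi, smul_eq_mul, Real.exp_neg, div_eq_mul_inv]
      field_simp [Real.exp_ne_zero]
    linarith
  linarith

lemma aux_arith {C₁ δ s M : ℝ} (hC₁ : 0 < C₁) (hδ : 0 < δ) (hδ1 : δ ≤ 1)
    (hM0 : 0 ≤ M) (hMs : M ≤ |s|) :
    (C₁*δ)^2 * M + (C₁*δ)^2 / (2*δ/C₁) ≤ (C₁^2 + C₁^3) * δ * (1 + |s|) := by
  have hdiv : (C₁*δ)^2 / (2*δ/C₁) = C₁^3*δ/2 := by
    field_simp
  rw [hdiv]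
  have h1 : δ * M ≤ |s| := le_trans (by nlinarith) hMs
  nlinarith [mul_le_mul_of_nonneg_left h1 (by positivity : (0:ℝ) ≤ C₁^2*δ),
    abs_nonneg s, mul_pos (mul_pos (pow_pos hC₁ 3) hδ) (by positivity : (0:ℝ) < (1:ℝ)),
    mul_nonneg (mul_nonneg (pow_pos hC₁ 2).le hδ.le) (abs_nonneg s)]

/-- L² tail estimate for a shifted shock profile: if
`v₊ - v₋ ≤ C₁δ`, `|v^s(ξ) - v₊| ≤ C₁δe^{-δξ/C₁}` for `ξ ≥ 0` and
`|v^s(ξ) - v₋| ≤ C₁δe^{-δ|ξ|/C₁}` for `ξ ≤ 0`, with `δ = p(v₋) - p(v₊) ≤ 1`, then for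
every shift `s`, `∫₀^∞ |v^s(x-s) - v₊|² dx ≤ Cδ(1+|s|)` and
`∫_{-∞}^0 |v^s(x-s) - v₋|² dx ≤ Cδ(1+|s|)`, with `C` depending only on `C₁`. -/
theorem shifted_profile_tail_L2_estimate (C₁ : ℝ) (hC₁ : 0 < C₁) :
    ∃ C > 0, ∀ γ vm vp : ℝ, ∀ vs : ℝ → ℝ,
      1 < γ → 0 < vm → vm < vp →
      vm ^ (-γ) - vp ^ (-γ) ≤ 1 →
      (∀ ξ : ℝ, vs ξ ∈ Set.Icc vm vp) →
      vp - vm ≤ C₁ * (vm ^ (-γ) - vp ^ (-γ)) →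
      (∀ ξ : ℝ, 0 ≤ ξ → |vs ξ - vp| ≤
        C₁ * (vm ^ (-γ) - vp ^ (-γ)) *
          Real.exp (-(vm ^ (-γ) - vp ^ (-γ)) * ξ / C₁)) →
      (∀ ξ : ℝ, ξ ≤ 0 → |vs ξ - vm| ≤
        C₁ * (vm ^ (-γ) - vp ^ (-γ)) *
          Real.exp (-(vm ^ (-γ) - vp ^ (-γ)) * |ξ| / C₁)) →
      ∀ s : ℝ,
        (∫ x in Set.Ioi (0:ℝ), (vs (x - s) - vp) ^ 2) ≤
          C * (vm ^ (-γ) - vp ^ (-γ)) * (1 + |s|) ∧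
        (∫ x in Set.Iio (0:ℝ), (vs (x - s) - vm) ^ 2) ≤
          C * (vm ^ (-γ) - vp ^ (-γ)) * (1 + |s|) := by
  refine ⟨C₁^2 + C₁^3, by positivity, ?_⟩
  intro γ vm vp vs hγ hvm hmp hδ1 hrange hwidth hdecp hdecm s
  set δ := vm ^ (-γ) - vp ^ (-γ) with hδdef
  have hδ : 0 < δ := by
    have h1 : vm ^ γ < vp ^ γ := Real.rpow_lt_rpow hvm.le hmp (by linarith)
    have h2 : (0:ℝ) < vm ^ γ := Real.rpow_pos_of_pos hvm γ
    have h3 : vp ^ (-γ) < vm ^ (-γ) := by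
      rw [Real.rpow_neg hvm.le, Real.rpow_neg (by linarith : (0:ℝ) ≤ vp)]
      exact inv_strictAnti₀ h2 h1
    simp only [hδdef]; linarith
  have hsq : ∀ u b : ℝ, |u| ≤ b → u ^ 2 ≤ b ^ 2 := by
    intro u b h
    calc u ^ 2 = |u| ^ 2 := (sq_abs u).symm
    _ ≤ b ^ 2 := pow_le_pow_left₀ (abs_nonneg u) h 2
  have hbp : ∀ ξ : ℝ, |vs ξ - vp| ≤ C₁ * δ := by
    intro ξ
    obtain ⟨h1, h2⟩ := hrange ξ
    rw [abs_le]; constructor <;> linarith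
  have hbm : ∀ ξ : ℝ, |vs ξ - vm| ≤ C₁ * δ := by
    intro ξ
    obtain ⟨h1, h2⟩ := hrange ξ
    rw [abs_le]; constructor <;> linarith
  constructor
  · -- right tail
    have key := aux_tail (A := (C₁*δ)^2) (a := 2*δ/C₁) (M := max 0 s)
      (by positivity) (by positivity) (le_max_left 0 s)
      (f := fun x => (vs (x - s) - vp) ^ 2)
      (fun x => sq_nonneg _)
      (fun x => hsq _ _ (hbp (x - s)))
      ?_
    · refine le_trans key ?_
      exact aux_arith hC₁ hδ hδ1 (le_max_left 0 s) (max_le (abs_nonneg s) (le_abs_self s))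
    · intro x hx
      have hsM : s ≤ max 0 s := le_max_right 0 s
      have hξ : 0 ≤ x - s := by linarith
      have h := hdecp (x - s) hξ
      have h2 := hsq _ _ h
      refine le_trans h2 ?_
      rw [mul_pow, ← Real.exp_nat_mul]
      rw [mul_le_mul_iff_right₀ (by positivity : (0:ℝ) < (C₁*δ)^2)]
      rw [Real.exp_le_exp]
      have key : (2*δ) * (x - max 0 s) ≤ (2*δ) * (x - s) :=
        mul_le_mul_of_nonneg_left (by linarith) (by linarith)
      have hkey := mul_le_mul_of_nonneg_right key (inv_nonneg.mpr hC₁.le)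
      push_cast
      simp only [div_eq_mul_inv]
      nlinarith [hkey]
  · -- left tail
    have hIio : (∫ x in Set.Iio (0:ℝ), (vs (x - s) - vm) ^ 2)
        = ∫ x in Set.Ioi (0:ℝ), (vs (-x - s) - vm) ^ 2 := by
      have h := integral_comp_neg_Ioi (0:ℝ) (fun x => (vs (x - s) - vm) ^ 2)
      simp only [neg_zero] at h
      rw [integral_Iic_eq_integral_Iio] at h
      exact h.symm
    rw [hIio]
    have key := aux_tail (A := (C₁*δ)^2) (a := 2*δ/C₁) (M := max 0 (-s))
      (by positivity) (by positivity) (le_max_left 0 (-s))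
      (f := fun x => (vs (-x - s) - vm) ^ 2)
      (fun x => sq_nonneg _)
      (fun x => hsq _ _ (hbm (-x - s)))
      ?_
    · refine le_trans key ?_
      refine aux_arith hC₁ hδ hδ1 (le_max_left 0 (-s)) (max_le (abs_nonneg s) ?_)
      rw [← abs_neg]; exact le_abs_self (-s)
    · intro x hx
      have hsM : -s ≤ max 0 (-s) := le_max_right 0 (-s)
      have hξ : -x - s ≤ 0 := by linarith
      have h := hdecm (-x - s) hξ
      have h2 := hsq _ _ h
      refine le_trans h2 ?_
      rw [mul_pow, ← Real.exp_nat_mul]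
      rw [mul_le_mul_iff_right₀ (by positivity : (0:ℝ) < (C₁*δ)^2)]
      rw [Real.exp_le_exp]
      rw [abs_of_nonpos hξ]
      have key : (2*δ) * (x - max 0 (-s)) ≤ (2*δ) * (x + s) :=
        mul_le_mul_of_nonneg_left (by linarith) (by linarith)
      have hkey := mul_le_mul_of_nonneg_right key (inv_nonneg.mpr hC₁.le)
      push_cast
      simp only [div_eq_mul_inv]
      nlinarith [hkey]
end
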